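/- Let G = U(1) act via U_CS(t) = e^{-itC_H} with U_CS(t̃_max) = e^{iθ}I, and suppose t̃_max = N·t_max with N a positive integer (N clock cycles per gauge cycle). Then the full group average (1/t̃_max)·∫₀^{t̃_max} U_CS(φ)(|τ⟩⟨τ| ⊗ f_S)U_CS(φ)† dφ equals (1/t_max)·∫₀^{t_max} U_CS(φ)(|τ⟩⟨τ| ⊗ f_S^H)U_CS(φ)† dφ, where f_S^H := (1/N)·Σ_{z=0}^{N−1} U_S(z·t_max) f_S U_S(z·t_max)† is the average of f_S over the clock's isotropy group ℤ_N. Moreover f_S^H satisfies U_S(z·t_max) f_S^H U_S(z·t_max)† = f_S^H for all z. -/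

import Mathlib

open Real Matrix Kronecker NormedSpace

attribute [local instance] Matrix.frobeniusNormedAddCommGroup Matrix.frobeniusNormedSpace

/-- The covariant clock state `|φ⟩ = Σ_j e^{i g(ε_j)} e^{-i ε_j φ} |ε_j⟩` as a vector. -/
noncomputable def clockVec {dC : ℕ} (v : Fin dC → Fin dC → ℂ) (ε g : Fin dC → ℝ) (φ : ℝ) :
    Fin dC → ℂ :=
  fun i => ∑ j, Complex.exp (Complex.I * (g j : ℂ)) *
    Complex.exp (-Complex.I * (ε j : ℂ) * (φ : ℂ)) * v j i

/-- The rank-one matrix `|u⟩⟨u|`. -/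
noncomputable def ketbraM {dC : ℕ} (u : Fin dC → ℂ) : Matrix (Fin dC) (Fin dC) ℂ :=
  Matrix.vecMulVec u (star u)

/-- The system unitary `U_S(t) = exp(-i t H_S)`. -/
noncomputable def US {dS : ℕ} (HS : Matrix (Fin dS) (Fin dS) ℂ) (t : ℝ) :
    Matrix (Fin dS) (Fin dS) ℂ :=
  NormedSpace.exp ((-(t : ℂ) * Complex.I) • HS)

/-- The constraint unitary `U_{CS}(t) = exp(-i t C_H)` for `C_H = H_C ⊗ I + I ⊗ H_S`. -/
noncomputable def UCS {dC dS : ℕ} (HC : Matrix (Fin dC) (Fin dC) ℂ)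
    (HS : Matrix (Fin dS) (Fin dS) ℂ) (t : ℝ) :
    Matrix (Fin dC × Fin dS) (Fin dC × Fin dS) ℂ :=
  NormedSpace.exp ((-(t : ℂ) * Complex.I) •
    (HC ⊗ₖ (1 : Matrix (Fin dS) (Fin dS) ℂ) + (1 : Matrix (Fin dC) (Fin dC) ℂ) ⊗ₖ HS))

/-- The isotropy-group average `f_S^H = (1/N)·Σ_{z=0}^{N−1} U_S(z t_max) f_S U_S(z t_max)†`. -/
noncomputable def fSH {dS : ℕ} (HS fS : Matrix (Fin dS) (Fin dS) ℂ) (tmax : ℝ) (N : ℕ) :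
    Matrix (Fin dS) (Fin dS) ℂ :=
  ((N : ℂ))⁻¹ • ∑ z ∈ Finset.range N, US HS ((z : ℝ) * tmax) * fS * (US HS ((z : ℝ) * tmax))ᴴ

/-! ### Auxiliary lemmas -/

section Aux

lemma exp_mulVec_eigen {n : ℕ} (M : Matrix (Fin n) (Fin n) ℂ) (u : Fin n → ℂ) (μ : ℂ)
    (h : M *ᵥ u = μ • u) : NormedSpace.exp M *ᵥ u = Complex.exp μ • u := by
  letI : NormedRing (Matrix (Fin n) (Fin n) ℂ) := Matrix.frobeniusNormedRing
  letI : NormedAlgebra ℂ (Matrix (Fin n) (Fin n) ℂ) := Matrix.frobeniusNormedAlgebra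
  have hpow : ∀ k : ℕ, (M ^ k) *ᵥ u = μ ^ k • u := by
    intro k
    induction k with
    | zero => simp
    | succ k ih =>
        rw [pow_succ, ← Matrix.mulVec_mulVec, h, Matrix.mulVec_smul, ih, smul_smul, pow_succ,
          mul_comm]
  have hs : Summable fun k : ℕ => ((Nat.factorial k : ℂ))⁻¹ • M ^ k :=
    NormedSpace.expSeries_summable' M
  let L : Matrix (Fin n) (Fin n) ℂ →ₗ[ℂ] (Fin n → ℂ) :=
    { toFun := fun A => A *ᵥ u
      map_add' := fun A B => Matrix.add_mulVec A B u
      map_smul' := fun c A => Matrix.smul_mulVec c A u }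
  have h1 : NormedSpace.exp M *ᵥ u
      = ∑' k : ℕ, ((Nat.factorial k : ℂ))⁻¹ • (M ^ k *ᵥ u) := by
    have := (L.toContinuousLinearMap).map_tsum hs
    simpa [NormedSpace.exp_eq_tsum (𝕂 := ℂ), L] using this
  rw [h1]
  have h2 : ∀ k : ℕ, ((Nat.factorial k : ℂ))⁻¹ • (M ^ k *ᵥ u)
      = (((Nat.factorial k : ℂ))⁻¹ * μ ^ k) • u := by
    intro k; rw [hpow, smul_smul]
  simp only [h2]
  have hs2 : Summable fun k : ℕ => ((Nat.factorial k : ℂ))⁻¹ * μ ^ k := by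
    simpa [smul_eq_mul] using NormedSpace.expSeries_summable' (𝕂 := ℂ) μ
  rw [hs2.tsum_smul_const]
  congr 1
  rw [Complex.exp_eq_exp_ℂ, NormedSpace.exp_eq_tsum (𝕂 := ℂ)]
  simp [smul_eq_mul]

/-- `A ↦ A ⊗ₖ 1` as an algebra hom. -/
noncomputable def kronLHom (dC dS : ℕ) :
    Matrix (Fin dC) (Fin dC) ℂ →ₐ[ℂ] Matrix (Fin dC × Fin dS) (Fin dC × Fin dS) ℂ where
  toFun A := A ⊗ₖ (1 : Matrix (Fin dS) (Fin dS) ℂ)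
  map_one' := Matrix.one_kronecker_one
  map_mul' A B := by rw [← Matrix.mul_kronecker_mul, one_mul]
  map_zero' := Matrix.zero_kronecker _
  map_add' A B := Matrix.add_kronecker A B 1
  commutes' c := by
    simp only [Algebra.algebraMap_eq_smul_one, Matrix.smul_kronecker, Matrix.one_kronecker_one]

/-- `B ↦ 1 ⊗ₖ B` as an algebra hom. -/
noncomputable def kronRHom (dC dS : ℕ) :
    Matrix (Fin dS) (Fin dS) ℂ →ₐ[ℂ] Matrix (Fin dC × Fin dS) (Fin dC × Fin dS) ℂ where
  toFun B := (1 : Matrix (Fin dC) (Fin dC) ℂ) ⊗ₖ B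
  map_one' := Matrix.one_kronecker_one
  map_mul' A B := by rw [← Matrix.mul_kronecker_mul, one_mul]
  map_zero' := Matrix.kronecker_zero _
  map_add' A B := Matrix.kronecker_add 1 A B
  commutes' c := by
    simp only [Algebra.algebraMap_eq_smul_one, Matrix.kronecker_smul, Matrix.one_kronecker_one]

lemma exp_kron_left (dC dS : ℕ) (A : Matrix (Fin dC) (Fin dC) ℂ) :
    NormedSpace.exp (A ⊗ₖ (1 : Matrix (Fin dS) (Fin dS) ℂ))
      = (NormedSpace.exp A) ⊗ₖ (1 : Matrix (Fin dS) (Fin dS) ℂ) := by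
  letI : NormedRing (Matrix (Fin dC) (Fin dC) ℂ) := Matrix.frobeniusNormedRing
  letI : NormedAlgebra ℂ (Matrix (Fin dC) (Fin dC) ℂ) := Matrix.frobeniusNormedAlgebra
  letI : NormedRing (Matrix (Fin dC × Fin dS) (Fin dC × Fin dS) ℂ) := Matrix.frobeniusNormedRing
  letI : NormedAlgebra ℂ (Matrix (Fin dC × Fin dS) (Fin dC × Fin dS) ℂ) :=
    Matrix.frobeniusNormedAlgebra
  letI : NormedAlgebra ℚ (Matrix (Fin dC) (Fin dC) ℂ) := Matrix.frobeniusNormedAlgebra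
  have hc : Continuous (kronLHom dC dS) :=
    (kronLHom dC dS).toLinearMap.continuous_of_finiteDimensional
  exact (NormedSpace.map_exp (kronLHom dC dS) hc A).symm

lemma exp_kron_right (dC dS : ℕ) (B : Matrix (Fin dS) (Fin dS) ℂ) :
    NormedSpace.exp ((1 : Matrix (Fin dC) (Fin dC) ℂ) ⊗ₖ B)
      = (1 : Matrix (Fin dC) (Fin dC) ℂ) ⊗ₖ (NormedSpace.exp B) := by
  letI : NormedRing (Matrix (Fin dS) (Fin dS) ℂ) := Matrix.frobeniusNormedRing
  letI : NormedAlgebra ℂ (Matrix (Fin dS) (Fin dS) ℂ) := Matrix.frobeniusNormedAlgebra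
  letI : NormedRing (Matrix (Fin dC × Fin dS) (Fin dC × Fin dS) ℂ) := Matrix.frobeniusNormedRing
  letI : NormedAlgebra ℂ (Matrix (Fin dC × Fin dS) (Fin dC × Fin dS) ℂ) :=
    Matrix.frobeniusNormedAlgebra
  letI : NormedAlgebra ℚ (Matrix (Fin dS) (Fin dS) ℂ) := Matrix.frobeniusNormedAlgebra
  have hc : Continuous (kronRHom dC dS) :=
    (kronRHom dC dS).toLinearMap.continuous_of_finiteDimensional
  exact (NormedSpace.map_exp (kronRHom dC dS) hc B).symm

/-- The clock unitary `U_C(t) = exp(-i t H_C)`. -/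
noncomputable def UC {dC : ℕ} (HC : Matrix (Fin dC) (Fin dC) ℂ) (t : ℝ) :
    Matrix (Fin dC) (Fin dC) ℂ :=
  NormedSpace.exp ((-(t : ℂ) * Complex.I) • HC)

lemma UCS_eq_kron {dC dS : ℕ} (HC : Matrix (Fin dC) (Fin dC) ℂ)
    (HS : Matrix (Fin dS) (Fin dS) ℂ) (t : ℝ) :
    UCS HC HS t = (UC HC t) ⊗ₖ (US HS t) := by
  rw [UCS, smul_add, Matrix.exp_add_of_commute]
  · rw [← Matrix.smul_kronecker, ← Matrix.kronecker_smul, exp_kron_left, exp_kron_right,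
      ← Matrix.mul_kronecker_mul, mul_one, one_mul, UC, US]
  · rw [← Matrix.smul_kronecker, ← Matrix.kronecker_smul]
    rw [Commute, SemiconjBy, ← Matrix.mul_kronecker_mul, ← Matrix.mul_kronecker_mul,
      one_mul, mul_one, one_mul, mul_one]

lemma UCS_add {dC dS : ℕ} (HC : Matrix (Fin dC) (Fin dC) ℂ)
    (HS : Matrix (Fin dS) (Fin dS) ℂ) (a b : ℝ) :
    UCS HC HS (a + b) = UCS HC HS a * UCS HC HS b := by
  rw [UCS, UCS, UCS, ← Matrix.exp_add_of_commute]
  · congr 1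
    rw [← add_smul]
    congr 1
    push_cast
    ring
  · exact ((Commute.refl _).smul_left _).smul_right _

lemma US_add {dS : ℕ} (HS : Matrix (Fin dS) (Fin dS) ℂ) (a b : ℝ) :
    US HS (a + b) = US HS a * US HS b := by
  rw [US, US, US, ← Matrix.exp_add_of_commute]
  · congr 1
    rw [← add_smul]
    congr 1
    push_cast
    ring
  · exact ((Commute.refl HS).smul_left _).smul_right _

lemma US_zero {dS : ℕ} (HS : Matrix (Fin dS) (Fin dS) ℂ) : US HS 0 = 1 := by
  simp [US, NormedSpace.exp_zero]

lemma US_conjTranspose {dS : ℕ} (HS : Matrix (Fin dS) (Fin dS) ℂ) (hHS : HS.IsHermitian)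
    (t : ℝ) : (US HS t)ᴴ = US HS (-t) := by
  rw [US, US, ← Matrix.exp_conjTranspose]
  congr 1
  rw [Matrix.conjTranspose_smul, hHS.eq]
  congr 1
  push_cast
  simp [Complex.conj_ofReal]

lemma US_mul_US_neg {dS : ℕ} (HS : Matrix (Fin dS) (Fin dS) ℂ) (t : ℝ) :
    US HS t * US HS (-t) = 1 := by
  rw [← US_add, add_neg_cancel, US_zero]

lemma conjTranspose_kron {l m n p : Type*} (A : Matrix l m ℂ) (B : Matrix n p ℂ) :
    (A ⊗ₖ B)ᴴ = Aᴴ ⊗ₖ Bᴴ := by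
  ext i j
  simp [Matrix.conjTranspose_apply, Matrix.kroneckerMap_apply, mul_comm]

lemma ketbra_conj {n : ℕ} (M : Matrix (Fin n) (Fin n) ℂ) (u : Fin n → ℂ) :
    M * ketbraM u * Mᴴ = ketbraM (M *ᵥ u) := by
  ext i j
  simp only [ketbraM, Matrix.mul_apply, Matrix.vecMulVec_apply, Matrix.conjTranspose_apply,
    Matrix.mulVec, dotProduct, Pi.star_apply, RCLike.star_def, map_sum, _root_.map_mul,
    Finset.sum_mul, Finset.mul_sum]
  apply Finset.sum_congr rfl
  intro k _
  apply Finset.sum_congr rfl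
  intro l _
  ring

lemma clockVec_eq_sum {dC : ℕ} (v : Fin dC → Fin dC → ℂ) (ε g : Fin dC → ℝ) (φ : ℝ) :
    clockVec v ε g φ = ∑ j, (Complex.exp (Complex.I * (g j : ℂ)) *
      Complex.exp (-Complex.I * (ε j : ℂ) * (φ : ℂ))) • v j := by
  funext i
  rw [clockVec, Finset.sum_apply]
  exact Finset.sum_congr rfl fun j _ => by simp [mul_assoc]

lemma UC_mulVec_eigvec {dC : ℕ} (HC : Matrix (Fin dC) (Fin dC) ℂ)
    {v : Fin dC → ℂ} {e : ℝ} (heig : HC *ᵥ v = (e : ℂ) • v) (s : ℝ) :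
    UC HC s *ᵥ v = Complex.exp (-(s : ℂ) * Complex.I * (e : ℂ)) • v := by
  apply exp_mulVec_eigen
  rw [Matrix.smul_mulVec, heig, smul_smul]

lemma UC_mulVec_clockVec {dC : ℕ} (HC : Matrix (Fin dC) (Fin dC) ℂ)
    (v : Fin dC → Fin dC → ℂ) (ε g : Fin dC → ℝ)
    (heig : ∀ j, HC *ᵥ v j = (ε j : ℂ) • v j) (τ s : ℝ) :
    UC HC s *ᵥ clockVec v ε g τ = clockVec v ε g (τ + s) := by
  rw [clockVec_eq_sum, clockVec_eq_sum]
  rw [← Matrix.mulVecLin_apply, map_sum]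
  apply Finset.sum_congr rfl
  intro j _
  rw [_root_.map_smul, Matrix.mulVecLin_apply, UC_mulVec_eigvec HC (heig j) s, smul_smul,
    mul_assoc, ← Complex.exp_add]
  congr 2
  push_cast
  ring

lemma clockVec_shift {dC : ℕ} (v : Fin dC → Fin dC → ℂ) (ε g : Fin dC → ℝ)
    (tmax φ0 : ℝ) (ht : tmax ≠ 0)
    (hlat : ∀ j, ∃ n : ℤ, ε j = (2 * π / tmax) * ((n : ℝ) + φ0 / (2 * π))) (τ : ℝ) (z : ℤ) :
    clockVec v ε g (τ + (z : ℝ) * tmax)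
      = Complex.exp (-Complex.I * (φ0 : ℂ) * (z : ℂ)) • clockVec v ε g τ := by
  funext i
  simp only [clockVec, Pi.smul_apply, smul_eq_mul, Finset.mul_sum]
  apply Finset.sum_congr rfl
  intro j _
  obtain ⟨n, hn⟩ := hlat j
  have hre : (ε j : ℝ) * ((z : ℝ) * tmax) = 2 * π * (((n * z : ℤ)) : ℝ) + φ0 * z := by
    rw [hn]; push_cast; field_simp
  have hC : ((ε j : ℝ) : ℂ) * (((z : ℝ) : ℂ) * ((tmax : ℝ) : ℂ))
      = 2 * (π : ℂ) * ((n : ℂ) * (z : ℂ)) + ((φ0 : ℝ) : ℂ) * (z : ℂ) := by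
    exact_mod_cast congrArg (Complex.ofReal) hre
  have hexp : Complex.exp (-Complex.I * (ε j : ℂ) * ((τ + (z : ℝ) * tmax : ℝ) : ℂ))
      = Complex.exp (-Complex.I * (φ0 : ℂ) * (z : ℂ))
        * Complex.exp (-Complex.I * (ε j : ℂ) * (τ : ℂ)) := by
    rw [show -Complex.I * (ε j : ℂ) * ((τ + (z : ℝ) * tmax : ℝ) : ℂ)
        = (-Complex.I * (φ0 : ℂ) * (z : ℂ) + -Complex.I * (ε j : ℂ) * (τ : ℂ))
          + ((-(n * z) : ℤ) : ℂ) * (2 * (π : ℂ) * Complex.I) from by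
        push_cast
        push_cast at hC
        linear_combination (-Complex.I) * hC]
    rw [Complex.exp_add, Complex.exp_add, Complex.exp_int_mul_two_pi_mul_I, mul_one]
  rw [hexp]
  ring

lemma ketbraM_smul {n : ℕ} (c : ℂ) (u : Fin n → ℂ) :
    ketbraM (c • u) = (c * star c) • ketbraM u := by
  ext i j
  simp only [ketbraM, Matrix.vecMulVec_apply, Pi.smul_apply, Pi.star_apply, smul_eq_mul,
    star_mul', Matrix.smul_apply]
  ring

lemma UC_ketbra_inv {dC : ℕ} (HC : Matrix (Fin dC) (Fin dC) ℂ)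
    (v : Fin dC → Fin dC → ℂ) (ε g : Fin dC → ℝ) (tmax φ0 : ℝ) (ht : tmax ≠ 0)
    (heig : ∀ j, HC *ᵥ v j = (ε j : ℂ) • v j)
    (hlat : ∀ j, ∃ n : ℤ, ε j = (2 * π / tmax) * ((n : ℝ) + φ0 / (2 * π))) (τ : ℝ) (z : ℤ) :
    UC HC ((z : ℝ) * tmax) * ketbraM (clockVec v ε g τ) * (UC HC ((z : ℝ) * tmax))ᴴ
      = ketbraM (clockVec v ε g τ) := by
  rw [ketbra_conj, UC_mulVec_clockVec HC v ε g heig, clockVec_shift v ε g tmax φ0 ht hlat,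
    ketbraM_smul]
  rw [show star (Complex.exp (-Complex.I * (φ0 : ℂ) * (z : ℂ)))
      = Complex.exp (Complex.I * (φ0 : ℂ) * (z : ℂ)) from by
    rw [show (star (Complex.exp (-Complex.I * (φ0 : ℂ) * (z : ℂ))) : ℂ)
        = (starRingEnd ℂ) (Complex.exp (-Complex.I * (φ0 : ℂ) * (z : ℂ))) from rfl,
      ← Complex.exp_conj]
    congr 1
    simp [_root_.map_mul]]
  rw [← Complex.exp_add]
  simp

lemma kron_sum_right {dC dS : ℕ} (P : Matrix (Fin dC) (Fin dC) ℂ) {ι : Type*} (s : Finset ι)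
    (T : ι → Matrix (Fin dS) (Fin dS) ℂ) :
    P ⊗ₖ (∑ z ∈ s, T z) = ∑ z ∈ s, P ⊗ₖ T z := by
  classical
  induction s using Finset.induction_on with
  | empty => simp [Matrix.kronecker_zero]
  | @insert a s h ih => rw [Finset.sum_insert h, Finset.sum_insert h, Matrix.kronecker_add, ih]

lemma continuous_UCS {dC dS : ℕ} (HC : Matrix (Fin dC) (Fin dC) ℂ)
    (HS : Matrix (Fin dS) (Fin dS) ℂ) : Continuous fun t : ℝ => UCS HC HS t := by
  letI : NormedRing (Matrix (Fin dC × Fin dS) (Fin dC × Fin dS) ℂ) := Matrix.frobeniusNormedRing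
  letI : NormedAlgebra ℂ (Matrix (Fin dC × Fin dS) (Fin dC × Fin dS) ℂ) :=
    Matrix.frobeniusNormedAlgebra
  letI : NormedAlgebra ℚ (Matrix (Fin dC × Fin dS) (Fin dC × Fin dS) ℂ) :=
    Matrix.frobeniusNormedAlgebra
  have h1 : Continuous fun t : ℝ => (-(t : ℂ) * Complex.I) •
      (HC ⊗ₖ (1 : Matrix (Fin dS) (Fin dS) ℂ) + (1 : Matrix (Fin dC) (Fin dC) ℂ) ⊗ₖ HS) :=
    ((Complex.continuous_ofReal.neg).mul continuous_const).smul continuous_const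
  exact NormedSpace.exp_continuous.comp h1

/-- Key pointwise identity. -/
lemma key_pointwise {dC dS : ℕ} (HC : Matrix (Fin dC) (Fin dC) ℂ)
    (HS : Matrix (Fin dS) (Fin dS) ℂ)
    (v : Fin dC → Fin dC → ℂ) (ε g : Fin dC → ℝ) (tmax φ0 : ℝ) (ht : tmax ≠ 0)
    (heig : ∀ j, HC *ᵥ v j = (ε j : ℂ) • v j)
    (hlat : ∀ j, ∃ n : ℤ, ε j = (2 * π / tmax) * ((n : ℝ) + φ0 / (2 * π)))
    (fS : Matrix (Fin dS) (Fin dS) ℂ) (τ φ : ℝ) (z : ℕ) :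
    UCS HC HS (φ + (z : ℝ) * tmax) * ((ketbraM (clockVec v ε g τ)) ⊗ₖ fS) *
        (UCS HC HS (φ + (z : ℝ) * tmax))ᴴ
      = UCS HC HS φ * ((ketbraM (clockVec v ε g τ)) ⊗ₖ
          (US HS ((z : ℝ) * tmax) * fS * (US HS ((z : ℝ) * tmax))ᴴ)) * (UCS HC HS φ)ᴴ := by
  rw [UCS_add, Matrix.conjTranspose_mul]
  have hmid : UCS HC HS ((z : ℝ) * tmax) * ((ketbraM (clockVec v ε g τ)) ⊗ₖ fS) *
      (UCS HC HS ((z : ℝ) * tmax))ᴴ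
      = (ketbraM (clockVec v ε g τ)) ⊗ₖ
          (US HS ((z : ℝ) * tmax) * fS * (US HS ((z : ℝ) * tmax))ᴴ) := by
    rw [UCS_eq_kron, conjTranspose_kron, ← Matrix.mul_kronecker_mul, ← Matrix.mul_kronecker_mul]
    have h := UC_ketbra_inv HC v ε g tmax φ0 ht heig hlat τ (z : ℤ)
    push_cast at h
    rw [h]
  calc UCS HC HS φ * UCS HC HS ((z : ℝ) * tmax) * ((ketbraM (clockVec v ε g τ)) ⊗ₖ fS) *
        ((UCS HC HS ((z : ℝ) * tmax))ᴴ * (UCS HC HS φ)ᴴ)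
      = UCS HC HS φ * (UCS HC HS ((z : ℝ) * tmax) * ((ketbraM (clockVec v ε g τ)) ⊗ₖ fS) *
          (UCS HC HS ((z : ℝ) * tmax))ᴴ) * (UCS HC HS φ)ᴴ := by
        simp only [Matrix.mul_assoc]
    _ = _ := by rw [hmid]

end Aux

section Part2

variable {dC dS : ℕ}

lemma US_scalar_conj (hdC : 0 < dC) (HC : Matrix (Fin dC) (Fin dC) ℂ)
    (HS : Matrix (Fin dS) (Fin dS) ℂ) (hHS : HS.IsHermitian) (N : ℕ) (tmax : ℝ)
    (hper : ∃ θ : ℝ, UCS HC HS ((N : ℝ) * tmax) =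
      Complex.exp (Complex.I * (θ : ℂ)) • (1 : Matrix (Fin dC × Fin dS) (Fin dC × Fin dS) ℂ))
    (X : Matrix (Fin dS) (Fin dS) ℂ) :
    US HS ((N : ℝ) * tmax) * X * (US HS ((N : ℝ) * tmax))ᴴ = X := by
  rcases Nat.eq_zero_or_pos dS with h0 | hpos
  · subst h0
    ext i j
    exact Fin.elim0 i
  obtain ⟨θ, heq⟩ := hper
  rw [UCS_eq_kron] at heq
  set A := UC HC ((N : ℝ) * tmax) with hA
  set B := US HS ((N : ℝ) * tmax) with hB
  set e := Complex.exp (Complex.I * (θ : ℂ)) with he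
  have he0 : e ≠ 0 := Complex.exp_ne_zero _
  set i0 : Fin dC := ⟨0, hdC⟩
  set a0 : Fin dS := ⟨0, hpos⟩
  have hentry : ∀ a b : Fin dS, A i0 i0 * B a b = if a = b then e else 0 := by
    intro a b
    have h := congrFun (congrFun heq (i0, a)) (i0, b)
    simpa [Matrix.kroneckerMap_apply, Matrix.smul_apply, Matrix.one_apply, Prod.ext_iff,
      smul_eq_mul, mul_one, eq_comm] using h
  have hq : A i0 i0 * B a0 a0 = e := by simpa using hentry a0 a0
  have hc0 : A i0 i0 ≠ 0 := by
    intro h; rw [h, zero_mul] at hq; exact he0 hq.symm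
  set q := B a0 a0 with hqdef
  have hBq : B = q • (1 : Matrix (Fin dS) (Fin dS) ℂ) := by
    ext a b
    rcases eq_or_ne a b with rfl | hab
    · have h1 := hentry a a
      have h2 := hq
      rw [if_pos rfl] at h1
      have h3 : A i0 i0 * B a a = A i0 i0 * q := by rw [h1, ← h2]
      have h4 := mul_left_cancel₀ hc0 h3
      rw [Matrix.smul_apply, Matrix.one_apply_eq, smul_eq_mul, mul_one]
      exact h4
    · have h1 := hentry a b
      rw [if_neg hab] at h1
      have : B a b = 0 := by
        rcases mul_eq_zero.mp h1 with h | h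
        · exact absurd h hc0
        · exact h
      rw [Matrix.smul_apply, Matrix.one_apply_ne hab, smul_eq_mul, mul_zero]
      exact this
  have hunit : B * Bᴴ = 1 := by
    rw [hB, US_conjTranspose HS hHS, US_mul_US_neg]
  have hq1 : q * star q = 1 := by
    have h := hunit
    rw [hBq, Matrix.conjTranspose_smul, Matrix.conjTranspose_one] at h
    have h2 := congrFun (congrFun h a0) a0
    simpa [Matrix.mul_apply, Matrix.smul_apply, Matrix.one_apply, Finset.sum_ite_eq,
      RCLike.star_def] using h2
  rw [hBq, Matrix.conjTranspose_smul, Matrix.conjTranspose_one]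
  rw [Matrix.smul_mul, Matrix.mul_smul, Matrix.mul_one, Matrix.one_mul, smul_smul]
  rw [mul_comm, hq1, one_smul]

lemma fSH_term_per (HS : Matrix (Fin dS) (Fin dS) ℂ) (hHS : HS.IsHermitian)
    (hdC : 0 < dC) (HC : Matrix (Fin dC) (Fin dC) ℂ) (N : ℕ) (tmax : ℝ)
    (hper : ∃ θ : ℝ, UCS HC HS ((N : ℝ) * tmax) =
      Complex.exp (Complex.I * (θ : ℂ)) • (1 : Matrix (Fin dC × Fin dS) (Fin dC × Fin dS) ℂ))
    (fS : Matrix (Fin dS) (Fin dS) ℂ) :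
    US HS ((N : ℝ) * tmax) * fS * (US HS ((N : ℝ) * tmax))ᴴ = fS :=
  US_scalar_conj hdC HC HS hHS N tmax hper fS

lemma US_fSH_step (HS : Matrix (Fin dS) (Fin dS) ℂ) (hHS : HS.IsHermitian)
    (hdC : 0 < dC) (HC : Matrix (Fin dC) (Fin dC) ℂ) (N : ℕ) (hN : 0 < N) (tmax : ℝ)
    (hper : ∃ θ : ℝ, UCS HC HS ((N : ℝ) * tmax) =
      Complex.exp (Complex.I * (θ : ℂ)) • (1 : Matrix (Fin dC × Fin dS) (Fin dC × Fin dS) ℂ))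
    (fS : Matrix (Fin dS) (Fin dS) ℂ) :
    US HS tmax * fSH HS fS tmax N * (US HS tmax)ᴴ = fSH HS fS tmax N := by
  set T : ℕ → Matrix (Fin dS) (Fin dS) ℂ :=
    fun z => US HS ((z : ℝ) * tmax) * fS * (US HS ((z : ℝ) * tmax))ᴴ with hT
  have hstep : ∀ z : ℕ, US HS tmax * T z * (US HS tmax)ᴴ = T (z + 1) := by
    intro z
    have hadd : US HS (((z + 1 : ℕ) : ℝ) * tmax) = US HS tmax * US HS ((z : ℝ) * tmax) := by
      rw [← US_add]
      congr 1
      push_cast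
      ring
    rw [hT]
    simp only []
    rw [hadd, Matrix.conjTranspose_mul]
    simp only [Matrix.mul_assoc]
  have hT0 : T 0 = fS := by
    simp [hT, US_zero, Matrix.conjTranspose_one]
  have hTN : T N = fS := by
    simpa [hT] using fSH_term_per HS hHS hdC HC N tmax hper fS
  rw [fSH, Matrix.mul_smul, Matrix.smul_mul]
  congr 1
  rw [Finset.mul_sum, Finset.sum_mul]
  have hsum : ∀ z ∈ Finset.range N,
      US HS tmax * (US HS ((z : ℝ) * tmax) * fS * (US HS ((z : ℝ) * tmax))ᴴ) * (US HS tmax)ᴴ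
        = T (z + 1) := fun z _ => hstep z
  calc ∑ z ∈ Finset.range N,
        US HS tmax * (US HS ((z : ℝ) * tmax) * fS * (US HS ((z : ℝ) * tmax))ᴴ) * (US HS tmax)ᴴ
      = ∑ z ∈ Finset.range N, T (z + 1) := Finset.sum_congr rfl hsum
    _ = ∑ z ∈ Finset.range (N + 1), T z - T 0 := by
        rw [Finset.sum_range_succ' T N]
        abel
    _ = ∑ z ∈ Finset.range N, T z + T N - T 0 := by rw [Finset.sum_range_succ]
    _ = ∑ z ∈ Finset.range N, T z := by rw [hTN, hT0]; abel
    _ = ∑ z ∈ Finset.range N, US HS ((z : ℝ) * tmax) * fS * (US HS ((z : ℝ) * tmax))ᴴ := rfl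

lemma US_fSH_inv (HS : Matrix (Fin dS) (Fin dS) ℂ) (hHS : HS.IsHermitian)
    (hdC : 0 < dC) (HC : Matrix (Fin dC) (Fin dC) ℂ) (N : ℕ) (hN : 0 < N) (tmax : ℝ)
    (hper : ∃ θ : ℝ, UCS HC HS ((N : ℝ) * tmax) =
      Complex.exp (Complex.I * (θ : ℂ)) • (1 : Matrix (Fin dC × Fin dS) (Fin dC × Fin dS) ℂ))
    (fS : Matrix (Fin dS) (Fin dS) ℂ) (z : ℤ) :
    US HS ((z : ℝ) * tmax) * fSH HS fS tmax N * (US HS ((z : ℝ) * tmax))ᴴ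
      = fSH HS fS tmax N := by
  have hstep := US_fSH_step HS hHS hdC HC N hN tmax hper fS
  have hneg : US HS (-tmax) * fSH HS fS tmax N * (US HS (-tmax))ᴴ = fSH HS fS tmax N := by
    have h1 : (US HS (-tmax))ᴴ = US HS tmax := by
      rw [US_conjTranspose HS hHS, neg_neg]
    have h2 : (US HS tmax)ᴴ = US HS (-tmax) := US_conjTranspose HS hHS tmax
    calc US HS (-tmax) * fSH HS fS tmax N * (US HS (-tmax))ᴴ
        = US HS (-tmax) * (US HS tmax * fSH HS fS tmax N * (US HS tmax)ᴴ) *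
          (US HS (-tmax))ᴴ := by rw [hstep]
      _ = (US HS (-tmax) * US HS tmax) * fSH HS fS tmax N *
          ((US HS tmax)ᴴ * (US HS (-tmax))ᴴ) := by simp only [Matrix.mul_assoc]
      _ = fSH HS fS tmax N := by
          have hinv : US HS (-tmax) * US HS tmax = 1 := by
            have := US_mul_US_neg HS (-tmax); rwa [neg_neg] at this
          rw [hinv, h1, h2, hinv, Matrix.one_mul, Matrix.mul_one]
  induction z using Int.induction_on with
  | zero => simp [US_zero, Matrix.conjTranspose_one]
  | succ k ih =>
      have hadd : US HS (((k + 1 : ℤ) : ℝ) * tmax) = US HS ((k : ℤ) * tmax) * US HS tmax := by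
        rw [← US_add]; congr 1; push_cast; ring
      push_cast at hadd ⊢
      rw [hadd, Matrix.conjTranspose_mul]
      calc US HS ((k : ℝ) * tmax) * US HS tmax * fSH HS fS tmax N *
            ((US HS tmax)ᴴ * (US HS ((k : ℝ) * tmax))ᴴ)
          = US HS ((k : ℝ) * tmax) * (US HS tmax * fSH HS fS tmax N * (US HS tmax)ᴴ) *
            (US HS ((k : ℝ) * tmax))ᴴ := by simp only [Matrix.mul_assoc]
        _ = fSH HS fS tmax N := by rw [hstep]; push_cast at ih; exact ih
  | pred k ih =>
      have hadd : US HS (((-k - 1 : ℤ) : ℝ) * tmax)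
          = US HS (((-k : ℤ) : ℝ) * tmax) * US HS (-tmax) := by
        rw [← US_add]; congr 1; push_cast; ring
      push_cast at hadd ⊢
      rw [hadd, Matrix.conjTranspose_mul]
      calc US HS (-(k : ℝ) * tmax) * US HS (-tmax) * fSH HS fS tmax N *
            ((US HS (-tmax))ᴴ * (US HS (-(k : ℝ) * tmax))ᴴ)
          = US HS (-(k : ℝ) * tmax) * (US HS (-tmax) * fSH HS fS tmax N * (US HS (-tmax))ᴴ) *
            (US HS (-(k : ℝ) * tmax))ᴴ := by simp only [Matrix.mul_assoc]
        _ = fSH HS fS tmax N := by rw [hneg]; push_cast at ih; exact ih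

end Part2


/-- Lemma 6 of the paper (compact case): if `U_{CS}` is `t̃_max`-periodic up to phase with
`t̃_max = N·t_max`, then the full `G`-twirl equals the one-cycle (partial) twirl of the
isotropy-group average `f_S^H`, and `f_S^H` is invariant under conjugation by `U_S(z t_max)`
for every integer `z`. -/
theorem stmt_16 (dC dS : ℕ) (hdC : 0 < dC) (tmax : ℝ) (ht : 0 < tmax) (φ0 : ℝ)
    (hφ0 : φ0 ∈ Set.Ico 0 (2 * π))
    (HC : Matrix (Fin dC) (Fin dC) ℂ) (hHC : HC.IsHermitian)
    (HS : Matrix (Fin dS) (Fin dS) ℂ) (hHS : HS.IsHermitian)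
    (v : Fin dC → Fin dC → ℂ)
    (hv : ∀ j k, star (v j) ⬝ᵥ v k = if j = k then (1 : ℂ) else 0)
    (ε : Fin dC → ℝ) (hsimple : Function.Injective ε)
    (heig : ∀ j, HC *ᵥ v j = (ε j : ℂ) • v j)
    (hlat : ∀ j, ∃ n : ℤ, ε j = (2 * π / tmax) * ((n : ℝ) + φ0 / (2 * π)))
    (g : Fin dC → ℝ)
    (fS : Matrix (Fin dS) (Fin dS) ℂ)
    (N : ℕ) (hN : 0 < N)
    (hper : ∃ θ : ℝ, UCS HC HS ((N : ℝ) * tmax) =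
      Complex.exp (Complex.I * (θ : ℂ)) • (1 : Matrix (Fin dC × Fin dS) (Fin dC × Fin dS) ℂ)) :
    (∀ τ : ℝ,
      (((N : ℝ) * tmax : ℝ) : ℂ)⁻¹ • (∫ φ in (0:ℝ)..((N : ℝ) * tmax),
          UCS HC HS φ * ((ketbraM (clockVec v ε g τ)) ⊗ₖ fS) * (UCS HC HS φ)ᴴ) =
        (tmax : ℂ)⁻¹ • ∫ φ in (0:ℝ)..tmax,
          UCS HC HS φ * ((ketbraM (clockVec v ε g τ)) ⊗ₖ fSH HS fS tmax N) *
            (UCS HC HS φ)ᴴ) ∧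
    (∀ z : ℤ,
      US HS ((z : ℝ) * tmax) * fSH HS fS tmax N * (US HS ((z : ℝ) * tmax))ᴴ =
        fSH HS fS tmax N) := by
  have htm : tmax ≠ 0 := ne_of_gt ht
  have hNne : (N : ℂ) ≠ 0 := Nat.cast_ne_zero.mpr hN.ne'
  constructor
  · intro τ
    set P := ketbraM (clockVec v ε g τ) with hP
    have hcont : ∀ f : Matrix (Fin dS) (Fin dS) ℂ,
        Continuous fun φ : ℝ => UCS HC HS φ * (P ⊗ₖ f) * (UCS HC HS φ)ᴴ := by
      intro f
      have h := continuous_UCS HC HS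
      exact (h.matrix_mul continuous_const).matrix_mul h.matrix_conjTranspose
    have hint : ∀ (f : Matrix (Fin dS) (Fin dS) ℂ) (a b : ℝ), @IntervalIntegrable _ _
        NormedAddCommGroup.toENormedAddCommMonoid.toENormedAddMonoid
        (fun φ => UCS HC HS φ * (P ⊗ₖ f) * (UCS HC HS φ)ᴴ) MeasureTheory.volume a b :=
      fun f a b => (hcont f).intervalIntegrable a b
    set T : ℕ → Matrix (Fin dS) (Fin dS) ℂ :=
      fun z => US HS ((z : ℝ) * tmax) * fS * (US HS ((z : ℝ) * tmax))ᴴ with hTdef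
    -- Step A: split the integral
    have hsplit : (∫ φ in (0:ℝ)..((N : ℝ) * tmax),
        UCS HC HS φ * (P ⊗ₖ fS) * (UCS HC HS φ)ᴴ)
        = ∑ z ∈ Finset.range N, ∫ φ in ((z : ℝ) * tmax)..(((z + 1 : ℕ) : ℝ) * tmax),
            UCS HC HS φ * (P ⊗ₖ fS) * (UCS HC HS φ)ᴴ := by
      have := intervalIntegral.sum_integral_adjacent_intervals
        (a := fun k : ℕ => (k : ℝ) * tmax) (n := N)
        (fun k _ => hint fS ((k : ℝ) * tmax) (((k + 1 : ℕ) : ℝ) * tmax))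
      simp only [Nat.cast_zero, zero_mul] at this
      exact this.symm
    -- Step B+C: each segment equals a twirl of T z over one period
    have hseg : ∀ z : ℕ, (∫ φ in ((z : ℝ) * tmax)..(((z + 1 : ℕ) : ℝ) * tmax),
        UCS HC HS φ * (P ⊗ₖ fS) * (UCS HC HS φ)ᴴ)
        = ∫ φ in (0:ℝ)..tmax, UCS HC HS φ * (P ⊗ₖ T z) * (UCS HC HS φ)ᴴ := by
      intro z
      have hcomp := intervalIntegral.integral_comp_add_right (a := (0:ℝ)) (b := tmax)
        (fun φ => UCS HC HS φ * (P ⊗ₖ fS) * (UCS HC HS φ)ᴴ) ((z : ℝ) * tmax)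
      have e1 : (z : ℝ) * tmax = 0 + (z : ℝ) * tmax := by ring
      have e2 : (((z + 1 : ℕ)) : ℝ) * tmax = tmax + (z : ℝ) * tmax := by push_cast; ring
      rw [e1, e2, ← hcomp]
      have key : ∀ φ : ℝ, UCS HC HS (φ + (z : ℝ) * tmax) * (P ⊗ₖ fS) *
          (UCS HC HS (φ + (z : ℝ) * tmax))ᴴ
          = UCS HC HS φ * (P ⊗ₖ T z) * (UCS HC HS φ)ᴴ := fun φ =>
        key_pointwise HC HS v ε g tmax φ0 htm heig hlat fS τ φ z
      simp only [key]
    -- Step D+E+F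
    have hsum2 : ∀ φ : ℝ, (∑ z ∈ Finset.range N,
        UCS HC HS φ * (P ⊗ₖ T z) * (UCS HC HS φ)ᴴ)
        = (N : ℂ) • (UCS HC HS φ * (P ⊗ₖ fSH HS fS tmax N) * (UCS HC HS φ)ᴴ) := by
      intro φ
      have hTsum : ∑ z ∈ Finset.range N, T z = (N : ℂ) • fSH HS fS tmax N := by
        rw [fSH, smul_smul, mul_inv_cancel₀ hNne, one_smul]
      rw [← Finset.sum_mul, ← Finset.mul_sum, ← kron_sum_right, hTsum, Matrix.kronecker_smul,
        Matrix.mul_smul, Matrix.smul_mul]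
    calc (((N : ℝ) * tmax : ℝ) : ℂ)⁻¹ • (∫ φ in (0:ℝ)..((N : ℝ) * tmax),
            UCS HC HS φ * (P ⊗ₖ fS) * (UCS HC HS φ)ᴴ)
        = (((N : ℝ) * tmax : ℝ) : ℂ)⁻¹ • ∑ z ∈ Finset.range N,
            ∫ φ in (0:ℝ)..tmax, UCS HC HS φ * (P ⊗ₖ T z) * (UCS HC HS φ)ᴴ := by
          rw [hsplit]
          congr 1
          exact Finset.sum_congr rfl fun z _ => hseg z
      _ = (((N : ℝ) * tmax : ℝ) : ℂ)⁻¹ • ∫ φ in (0:ℝ)..tmax, ∑ z ∈ Finset.range N,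
            UCS HC HS φ * (P ⊗ₖ T z) * (UCS HC HS φ)ᴴ := by
          rw [intervalIntegral.integral_finset_sum (fun z _ => hint (T z) 0 tmax)]
      _ = (((N : ℝ) * tmax : ℝ) : ℂ)⁻¹ • ∫ φ in (0:ℝ)..tmax,
            (N : ℂ) • (UCS HC HS φ * (P ⊗ₖ fSH HS fS tmax N) * (UCS HC HS φ)ᴴ) := by
          congr 1
          exact intervalIntegral.integral_congr fun φ _ => hsum2 φ
      _ = (tmax : ℂ)⁻¹ • ∫ φ in (0:ℝ)..tmax,
            UCS HC HS φ * (P ⊗ₖ fSH HS fS tmax N) * (UCS HC HS φ)ᴴ := by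
          rw [intervalIntegral.integral_smul, smul_smul]
          congr 1
          push_cast
          rw [mul_inv, mul_comm, ← mul_assoc, mul_inv_cancel₀ hNne, one_mul]
  · intro z
    exact US_fSH_inv HS hHS hdC HC N hN tmax hper fS z
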